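/- Let K be a field and D = K[x] the polynomial ring in one variable. Then the reciprocal complement R(D) equals the set of fractions f/g with f, g ∈ K[x], g ≠ 0, and deg(f) ≤ deg(g). -/

import Mathlib

/-!
The fractions `f / g` with `deg f ≤ deg g` form a subring of `K(x)` containing every `1 / d`,
so `R(K[x])` lies inside it. Conversely, splitting off constant terms, `f = x f₁ + a` and
`g = x q + c`, gives
`f / g = a / g + f₁ / q - c · f₁ / (g q)`,
where `f₁` has smaller degree than `f` and degree at most that of `q` and of `g q`; induction on
`deg f` then puts every such fraction in `R(K[x])`.
-/

noncomputable def recip (D : Type*) [CommRing D] [IsDomain D] : Subring (FractionRing D) :=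
  Subring.closure {x | ∃ d : D, d ≠ 0 ∧ x = (algebraMap D (FractionRing D) d)⁻¹}

section Recip

variable {D : Type*} [CommRing D] [IsDomain D]

theorem algebraMap_inv_mem_recip {d : D} (hd : d ≠ 0) :
    (algebraMap D (FractionRing D) d)⁻¹ ∈ recip D :=
  Subring.subset_closure ⟨d, hd, rfl⟩

theorem algebraMap_mem_recip_of_isUnit {u : D} (hu : IsUnit u) :
    algebraMap D (FractionRing D) u ∈ recip D := by
  simpa [map_units_inv] using algebraMap_inv_mem_recip (hu.unit⁻¹).ne_zero

end Recip

namespace Polynomial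

variable (K : Type*) [Field K]

local notation "φ" => algebraMap K[X] (FractionRing K[X])

noncomputable def regularAtInfty : Subring (FractionRing K[X]) where
  carrier := {x | ∃ f g : K[X], g ≠ 0 ∧ f.degree ≤ g.degree ∧ x = φ f / φ g}
  one_mem' := ⟨1, 1, one_ne_zero, le_rfl, by simp⟩
  zero_mem' := ⟨0, 1, one_ne_zero, by simp, by simp⟩
  mul_mem' := by
    rintro _ _ ⟨f₁, g₁, hg₁, hd₁, rfl⟩ ⟨f₂, g₂, hg₂, hd₂, rfl⟩
    refine ⟨f₁ * f₂, g₁ * g₂, mul_ne_zero hg₁ hg₂, ?_, by simp [div_mul_div_comm]⟩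
    simpa only [degree_mul] using add_le_add hd₁ hd₂
  add_mem' := by
    rintro _ _ ⟨f₁, g₁, hg₁, hd₁, rfl⟩ ⟨f₂, g₂, hg₂, hd₂, rfl⟩
    refine ⟨f₁ * g₂ + g₁ * f₂, g₁ * g₂, mul_ne_zero hg₁ hg₂, ?_, ?_⟩
    · refine (degree_add_le _ _).trans (max_le ?_ ?_) <;> rw [degree_mul, degree_mul]
      · exact add_le_add_left hd₁ _
      · exact add_le_add_right hd₂ _
    · have hφg₁ : φ g₁ ≠ 0 := by simpa
      have hφg₂ : φ g₂ ≠ 0 := by simpa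
      simp only [map_add, map_mul, div_add_div _ _ hφg₁ hφg₂]
  neg_mem' := by
    rintro _ ⟨f, g, hg, hd, rfl⟩
    exact ⟨-f, g, hg, (degree_neg f).symm ▸ hd, by rw [map_neg, neg_div]⟩

theorem recip_le_regularAtInfty : recip K[X] ≤ regularAtInfty K := by
  rw [recip, Subring.closure_le]
  rintro _ ⟨d, hd, rfl⟩
  exact ⟨1, d, hd, by simpa using zero_le_degree_iff.mpr hd, by rw [map_one, one_div]⟩

variable {K}

theorem algebraMap_C_mem_recip (a : K) : φ (C a) ∈ recip K[X] := by
  rcases eq_or_ne a 0 with rfl | ha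
  · simp
  · exact algebraMap_mem_recip_of_isUnit (isUnit_C.mpr ha.isUnit)

theorem div_mem_recip_of_natDegree_le (f : K[X]) {g : K[X]} (hg : g ≠ 0)
    (hfg : f.natDegree ≤ g.natDegree) : φ f / φ g ∈ recip K[X] := by
  induction h : f.natDegree using Nat.strong_induction_on generalizing f g with
  | _ n ih =>
  have hconst_div (a : K) : φ (C a) / φ g ∈ recip K[X] := by
    rw [div_eq_mul_inv]
    exact mul_mem (algebraMap_C_mem_recip a) (algebraMap_inv_mem_recip hg)
  rcases Nat.eq_zero_or_pos n with rfl | hn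
  · rw [eq_C_of_natDegree_eq_zero h]
    exact hconst_div _
  set f₁ := f.divX
  set q := g.divX
  have hf₁ : f₁.natDegree = n - 1 := by rw [natDegree_divX_eq_natDegree_tsub_one, h]
  have hq_deg : q.natDegree = g.natDegree - 1 := natDegree_divX_eq_natDegree_tsub_one
  have hq : q ≠ 0 := fun hq0 => by
    have hg_deg := congrArg natDegree (divX_eq_zero_iff.mp hq0)
    rw [natDegree_C] at hg_deg
    omega
  have hf₁q : f₁.natDegree ≤ q.natDegree := by omega
  have hf₁gq : f₁.natDegree ≤ (g * q).natDegree := by rw [natDegree_mul hg hq]; omega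
  have key : φ f / φ g = φ (C (f.coeff 0)) / φ g + φ f₁ / φ q
      - φ (C (g.coeff 0)) * (φ f₁ / φ (g * q)) := by
    have hfφ : φ f = φ f₁ * φ X + φ (C (f.coeff 0)) := by
      rw [← map_mul, ← map_add, divX_mul_X_add]
    have hgφ : φ g = φ q * φ X + φ (C (g.coeff 0)) := by
      rw [← map_mul, ← map_add, divX_mul_X_add]
    have hφg : φ g ≠ 0 := by simpa
    have hφq : φ q ≠ 0 := by simpa
    rw [map_mul]
    field_simp
    rw [hfφ, hgφ]
    ring
  rw [key]
  refine sub_mem (add_mem (hconst_div _) (ih _ (by omega) f₁ hq hf₁q rfl)) ?_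
  exact mul_mem (algebraMap_C_mem_recip _) (ih _ (by omega) f₁ (mul_ne_zero hg hq) hf₁gq rfl)

end Polynomial

theorem stmt_3 (K : Type*) [Field K] :
    (recip (Polynomial K) : Set (FractionRing (Polynomial K))) =
      {x | ∃ f g : Polynomial K, g ≠ 0 ∧ f.degree ≤ g.degree ∧
        x = algebraMap (Polynomial K) (FractionRing (Polynomial K)) f /
            algebraMap (Polynomial K) (FractionRing (Polynomial K)) g} := by
  refine Set.Subset.antisymm (Polynomial.recip_le_regularAtInfty K) ?_
  rintro _ ⟨f, g, hg, hfg, rfl⟩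
  exact Polynomial.div_mem_recip_of_natDegree_le f hg (Polynomial.natDegree_le_natDegree hfg)
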